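/- Let (T,F) and (T',F') be pairs over a braided monoidal category V and let (G,φ₂,φ₀,s) : Ψ(T,F) → Ψ(T',F') be a unital module monoidal functor between the induced unital module monoidal categories. Define γ_v := r'_{GF(v)} ∘ (id_{GF(v)}⊗'φ₀⁻¹) ∘ (φ₂_{F(v),1_T})⁻¹ ∘ s_{v,1_T} ∘ (id_{F'(v)}⊗'φ₀) ∘ (r'_{F'(v)})⁻¹ : F'(v) → GF(v). Then (G,φ₂,φ₀,γ) is a morphism of pairs (T,F) → (T',F') and Ψ applied to it recovers (G,φ₂,φ₀,s), i.e. s_{v,m} = φ₂_{F(v),m}∘(γ_v⊗'id_{G(m)}) for all v ∈ V and m ∈ T. In other words, the 2-functor Ψ is surjective on 1-morphisms. -/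

import Mathlib

open CategoryTheory MonoidalCategory Category

universe v₁ v₂ v₃ v₄ u₁ u₂ u₃ u₄

namespace ModMonPaper

/-! ### Strong monoidal functors as data plus property -/

section MonFunctor

variable (V : Type u₁) [Category.{v₁} V] [MonoidalCategory V]
variable (W : Type u₂) [Category.{v₂} W] [MonoidalCategory W]
variable (X : Type u₃) [Category.{v₃} X] [MonoidalCategory X]

/-- The data of a (strong) monoidal functor: a functor together with the
coherence isomorphisms `φ₂` and `φ₀`. -/
structure MonFunctorData where
  F : V ⥤ W
  φ₂ : ∀ x y : V, F.obj x ⊗ F.obj y ≅ F.obj (x ⊗ y)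
  φ₀ : 𝟙_ W ≅ F.obj (𝟙_ V)

variable {V W X}

/-- The axioms of a (strong) monoidal functor. -/
structure MonFunctorData.IsMonFunctor (D : MonFunctorData V W) : Prop where
  φ₂_natural : ∀ {x y x' y' : V} (f : x ⟶ x') (g : y ⟶ y'),
    (D.F.map f ⊗ₘ D.F.map g) ≫ (D.φ₂ x' y').hom = (D.φ₂ x y).hom ≫ D.F.map (f ⊗ₘ g)
  hexagon : ∀ x y z : V,
    ((D.φ₂ x y).hom ⊗ₘ 𝟙 (D.F.obj z)) ≫ (D.φ₂ (x ⊗ y) z).hom ≫ D.F.map (α_ x y z).hom =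
      (α_ (D.F.obj x) (D.F.obj y) (D.F.obj z)).hom ≫ (𝟙 (D.F.obj x) ⊗ₘ (D.φ₂ y z).hom) ≫
        (D.φ₂ x (y ⊗ z)).hom
  φ₀_left : ∀ x : V,
    (D.φ₀.hom ⊗ₘ 𝟙 (D.F.obj x)) ≫ (D.φ₂ (𝟙_ V) x).hom ≫ D.F.map (λ_ x).hom =
      (λ_ (D.F.obj x)).hom
  φ₀_right : ∀ x : V,
    (𝟙 (D.F.obj x) ⊗ₘ D.φ₀.hom) ≫ (D.φ₂ x (𝟙_ V)).hom ≫ D.F.map (ρ_ x).hom =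
      (ρ_ (D.F.obj x)).hom

variable (V) in
/-- The identity monoidal functor data. -/
def MonFunctorData.id : MonFunctorData V V :=
  ⟨𝟭 V, fun x y => Iso.refl (x ⊗ y), Iso.refl (𝟙_ V)⟩

/-- Composition of monoidal functor data. -/
def MonFunctorData.comp (D : MonFunctorData V W) (E : MonFunctorData W X) :
    MonFunctorData V X :=
  ⟨D.F ⋙ E.F, fun x y => E.φ₂ (D.F.obj x) (D.F.obj y) ≪≫ E.F.mapIso (D.φ₂ x y),
    E.φ₀ ≪≫ E.F.mapIso D.φ₀⟩

/-- A natural transformation between (strong) monoidal functors is monoidal if it is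
compatible with `φ₂` and `φ₀`. -/
def IsMonNT (D E : MonFunctorData V W) (τ : D.F ⟶ E.F) : Prop :=
  (∀ x y : V, (D.φ₂ x y).hom ≫ τ.app (x ⊗ y) = (τ.app x ⊗ₘ τ.app y) ≫ (E.φ₂ x y).hom) ∧
    D.φ₀.hom ≫ τ.app (𝟙_ V) = E.φ₀.hom

/-- A braided monoidal functor: a monoidal functor compatible with the braidings. -/
def MonFunctorData.IsBraidedFunctor [BraidedCategory V] [BraidedCategory W]
    (D : MonFunctorData V W) : Prop :=
  D.IsMonFunctor ∧
    ∀ x y : V, (D.φ₂ x y).hom ≫ D.F.map (β_ x y).hom =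
      (β_ (D.F.obj x) (D.F.obj y)).hom ≫ (D.φ₂ y x).hom

end MonFunctor

/-! ### Module categories -/

section ModuleCat

variable (V : Type u₁) [Category.{v₁} V] [MonoidalCategory V]
variable (M : Type u₂) [Category.{v₂} M]
variable (M' : Type u₃) [Category.{v₃} M']

/-- The data of a left `V`-module category structure on `M`. -/
structure ModuleData where
  act : V → M → M
  actMap : ∀ {v w : V} {x y : M}, (v ⟶ w) → (x ⟶ y) → (act v x ⟶ act w y)
  massoc : ∀ (v w : V) (x : M), act (v ⊗ w) x ≅ act v (act w x)
  munit : ∀ x : M, act (𝟙_ V) x ≅ x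

variable {V M M'}

/-- The axioms of a left module category. -/
structure ModuleData.IsModule (P : ModuleData V M) : Prop where
  actMap_id : ∀ (v : V) (x : M), P.actMap (𝟙 v) (𝟙 x) = 𝟙 (P.act v x)
  actMap_comp : ∀ {v w u : V} {x y z : M} (f : v ⟶ w) (g : w ⟶ u) (h : x ⟶ y) (k : y ⟶ z),
    P.actMap (f ≫ g) (h ≫ k) = P.actMap f h ≫ P.actMap g k
  massoc_natural : ∀ {v v' w w' : V} {x x' : M} (f : v ⟶ v') (g : w ⟶ w') (h : x ⟶ x'),
    P.actMap (f ⊗ₘ g) h ≫ (P.massoc v' w' x').hom =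
      (P.massoc v w x).hom ≫ P.actMap f (P.actMap g h)
  munit_natural : ∀ {x x' : M} (h : x ⟶ x'),
    P.actMap (𝟙 (𝟙_ V)) h ≫ (P.munit x').hom = (P.munit x).hom ≫ h
  pentagon : ∀ (u v w : V) (x : M),
    P.actMap (α_ u v w).hom (𝟙 x) ≫ (P.massoc u (v ⊗ w) x).hom ≫
        P.actMap (𝟙 u) (P.massoc v w x).hom =
      (P.massoc (u ⊗ v) w x).hom ≫ (P.massoc u v (P.act w x)).hom
  triangle : ∀ (v : V) (x : M),
    (P.massoc v (𝟙_ V) x).hom ≫ P.actMap (𝟙 v) (P.munit x).hom = P.actMap (ρ_ v).hom (𝟙 x)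

/-- Acting with a fixed object of `V` on an isomorphism of `M`. -/
def ModuleData.actIso (P : ModuleData V M)
    (hid : ∀ (v : V) (x : M), P.actMap (𝟙 v) (𝟙 x) = 𝟙 (P.act v x))
    (hcomp : ∀ {v w u : V} {x y z : M} (f : v ⟶ w) (g : w ⟶ u) (h : x ⟶ y) (k : y ⟶ z),
      P.actMap (f ≫ g) (h ≫ k) = P.actMap f h ≫ P.actMap g k)
    (v : V) {x y : M} (e : x ≅ y) : P.act v x ≅ P.act v y where
  hom := P.actMap (𝟙 v) e.hom
  inv := P.actMap (𝟙 v) e.inv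
  hom_inv_id := by rw [← hcomp]; simp [hid]
  inv_hom_id := by rw [← hcomp]; simp [hid]

/-- The data of a module functor. -/
structure ModuleFunctorData (P : ModuleData V M) (P' : ModuleData V M') where
  F : M ⥤ M'
  s : ∀ (v : V) (x : M), P'.act v (F.obj x) ≅ F.obj (P.act v x)

/-- The axioms of a module functor. -/
structure ModuleFunctorData.IsModuleFunctor {P : ModuleData V M} {P' : ModuleData V M'}
    (D : ModuleFunctorData P P') : Prop where
  s_natural : ∀ {v w : V} {x y : M} (f : v ⟶ w) (g : x ⟶ y),
    P'.actMap f (D.F.map g) ≫ (D.s w y).hom = (D.s v x).hom ≫ D.F.map (P.actMap f g)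
  pentagon : ∀ (v w : V) (x : M),
    (D.s (v ⊗ w) x).hom ≫ D.F.map (P.massoc v w x).hom =
      (P'.massoc v w (D.F.obj x)).hom ≫ P'.actMap (𝟙 v) (D.s w x).hom ≫
        (D.s v (P.act w x)).hom
  triangle : ∀ x : M,
    (D.s (𝟙_ V) x).hom ≫ D.F.map (P.munit x).hom = (P'.munit (D.F.obj x)).hom

/-- The identity module functor data. -/
def ModuleFunctorData.id (P : ModuleData V M) : ModuleFunctorData P P :=
  ⟨𝟭 M, fun v x => Iso.refl (P.act v x)⟩

/-- Composition of module functor data. -/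
def ModuleFunctorData.comp {M'' : Type u₄} [Category.{v₄} M''] {P : ModuleData V M}
    {P' : ModuleData V M'} {P'' : ModuleData V M''}
    (D : ModuleFunctorData P P') (E : ModuleFunctorData P' P'') :
    ModuleFunctorData P P'' :=
  ⟨D.F ⋙ E.F, fun v x => E.s v (D.F.obj x) ≪≫ E.F.mapIso (D.s v x)⟩

/-- Module natural transformations. -/
def IsModuleNT {P : ModuleData V M} {P' : ModuleData V M'}
    (D E : ModuleFunctorData P P') (τ : D.F ⟶ E.F) : Prop :=
  ∀ (v : V) (x : M),
    (D.s v x).hom ≫ τ.app (P.act v x) = P'.actMap (𝟙 v) (τ.app x) ≫ (E.s v x).hom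

end ModuleCat

end ModMonPaper
/-! ### Unital module monoidal categories -/

namespace ModMonPaper

section UMM

variable (V : Type u₁) [Category.{v₁} V] [MonoidalCategory V]
variable (M : Type u₂) [Category.{v₂} M] [MonoidalCategory M]
variable (M' : Type u₃) [Category.{v₃} M'] [MonoidalCategory M']

/-- The data of a unital module monoidal category over `V` on the (unital) monoidal
category `M`: a module category structure together with the coherences `α₁` and `α₂`. -/
structure ModMonData extends ModuleData V M where
  α₁ : ∀ (v : V) (x y : M), act v x ⊗ y ≅ act v (x ⊗ y)
  α₂ : ∀ (v : V) (x y : M), x ⊗ act v y ≅ act v (x ⊗ y)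

variable {V M M'}

/-- The axioms of a unital module monoidal category over a braided category `V`. -/
structure ModMonData.IsModMon [BraidedCategory V] (P : ModMonData V M) : Prop where
  toIsModule : P.toModuleData.IsModule
  α₁_natural : ∀ {v v' : V} {x x' y y' : M} (f : v ⟶ v') (g : x ⟶ x') (h : y ⟶ y'),
    (P.actMap f g ⊗ₘ h) ≫ (P.α₁ v' x' y').hom = (P.α₁ v x y).hom ≫ P.actMap f (g ⊗ₘ h)
  α₂_natural : ∀ {v v' : V} {x x' y y' : M} (f : v ⟶ v') (g : x ⟶ x') (h : y ⟶ y'),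
    (g ⊗ₘ P.actMap f h) ≫ (P.α₂ v' x' y').hom = (P.α₂ v x y).hom ≫ P.actMap f (g ⊗ₘ h)
  α₁_assoc : ∀ (v : V) (l m n : M),
    ((P.α₁ v l m).hom ⊗ₘ 𝟙 n) ≫ (P.α₁ v (l ⊗ m) n).hom ≫ P.actMap (𝟙 v) (α_ l m n).hom =
      (α_ (P.act v l) m n).hom ≫ (P.α₁ v l (m ⊗ n)).hom
  α₁_massoc : ∀ (v w : V) (m n : M),
    ((P.massoc v w m).hom ⊗ₘ 𝟙 n) ≫ (P.α₁ v (P.act w m) n).hom ≫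
        P.actMap (𝟙 v) (P.α₁ w m n).hom =
      (P.α₁ (v ⊗ w) m n).hom ≫ (P.massoc v w (m ⊗ n)).hom
  α₂_assoc : ∀ (v : V) (l m n : M),
    (α_ l m (P.act v n)).hom ≫ (𝟙 l ⊗ₘ (P.α₂ v m n).hom) ≫ (P.α₂ v l (m ⊗ n)).hom =
      (P.α₂ v (l ⊗ m) n).hom ≫ P.actMap (𝟙 v) (α_ l m n).hom
  α₂_massoc : ∀ (v w : V) (m n : M),
    (𝟙 m ⊗ₘ (P.massoc v w n).hom) ≫ (P.α₂ v m (P.act w n)).hom ≫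
        P.actMap (𝟙 v) (P.α₂ w m n).hom =
      (P.α₂ (v ⊗ w) m n).hom ≫ (P.massoc v w (m ⊗ n)).hom
  α₁_α₂ : ∀ (v : V) (l m n : M),
    ((P.α₂ v l m).hom ⊗ₘ 𝟙 n) ≫ (P.α₁ v (l ⊗ m) n).hom ≫ P.actMap (𝟙 v) (α_ l m n).hom =
      (α_ l (P.act v m) n).hom ≫ (𝟙 l ⊗ₘ (P.α₁ v m n).hom) ≫ (P.α₂ v l (m ⊗ n)).hom
  braiding_act : ∀ (v w : V) (m n : M),
    (P.α₂ v (P.act w m) n).hom ≫ P.actMap (𝟙 v) (P.α₁ w m n).hom ≫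
        (P.massoc v w (m ⊗ n)).inv ≫ P.actMap (β_ v w).hom (𝟙 (m ⊗ n)) =
      (P.α₁ w m (P.act v n)).hom ≫ P.actMap (𝟙 w) (P.α₂ v m n).hom ≫
        (P.massoc w v (m ⊗ n)).inv

/-- The data of a unital module monoidal functor. -/
structure UMMFunctorData (P : ModMonData V M) (P' : ModMonData V M') where
  F : M ⥤ M'
  φ₂ : ∀ x y : M, F.obj x ⊗ F.obj y ≅ F.obj (x ⊗ y)
  φ₀ : 𝟙_ M' ≅ F.obj (𝟙_ M)
  s : ∀ (v : V) (x : M), P'.act v (F.obj x) ≅ F.obj (P.act v x)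

/-- The axioms of a unital module monoidal functor. -/
structure UMMFunctorData.IsUMMFunctor {P : ModMonData V M} {P' : ModMonData V M'}
    (D : UMMFunctorData P P') : Prop where
  φ₂_natural : ∀ {x x' y y' : M} (f : x ⟶ x') (g : y ⟶ y'),
    (D.F.map f ⊗ₘ D.F.map g) ≫ (D.φ₂ x' y').hom = (D.φ₂ x y).hom ≫ D.F.map (f ⊗ₘ g)
  hexagon : ∀ x y z : M,
    ((D.φ₂ x y).hom ⊗ₘ 𝟙 (D.F.obj z)) ≫ (D.φ₂ (x ⊗ y) z).hom ≫ D.F.map (α_ x y z).hom =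
      (α_ (D.F.obj x) (D.F.obj y) (D.F.obj z)).hom ≫ (𝟙 (D.F.obj x) ⊗ₘ (D.φ₂ y z).hom) ≫
        (D.φ₂ x (y ⊗ z)).hom
  φ₀_left : ∀ x : M,
    (D.φ₀.hom ⊗ₘ 𝟙 (D.F.obj x)) ≫ (D.φ₂ (𝟙_ M) x).hom ≫ D.F.map (λ_ x).hom =
      (λ_ (D.F.obj x)).hom
  φ₀_right : ∀ x : M,
    (𝟙 (D.F.obj x) ⊗ₘ D.φ₀.hom) ≫ (D.φ₂ x (𝟙_ M)).hom ≫ D.F.map (ρ_ x).hom =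
      (ρ_ (D.F.obj x)).hom
  s_natural : ∀ {v w : V} {x y : M} (f : v ⟶ w) (g : x ⟶ y),
    P'.actMap f (D.F.map g) ≫ (D.s w y).hom = (D.s v x).hom ≫ D.F.map (P.actMap f g)
  s_pentagon : ∀ (v w : V) (x : M),
    (D.s (v ⊗ w) x).hom ≫ D.F.map (P.massoc v w x).hom =
      (P'.massoc v w (D.F.obj x)).hom ≫ P'.actMap (𝟙 v) (D.s w x).hom ≫
        (D.s v (P.act w x)).hom
  s_triangle : ∀ x : M,
    (D.s (𝟙_ V) x).hom ≫ D.F.map (P.munit x).hom = (P'.munit (D.F.obj x)).hom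
  compα₁ : ∀ (v : V) (x y : M),
    (P'.α₁ v (D.F.obj x) (D.F.obj y)).hom ≫ P'.actMap (𝟙 v) (D.φ₂ x y).hom ≫
        (D.s v (x ⊗ y)).hom =
      ((D.s v x).hom ⊗ₘ 𝟙 (D.F.obj y)) ≫ (D.φ₂ (P.act v x) y).hom ≫
        D.F.map (P.α₁ v x y).hom
  compα₂ : ∀ (v : V) (x y : M),
    (P'.α₂ v (D.F.obj x) (D.F.obj y)).hom ≫ P'.actMap (𝟙 v) (D.φ₂ x y).hom ≫
        (D.s v (x ⊗ y)).hom =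
      (𝟙 (D.F.obj x) ⊗ₘ (D.s v y).hom) ≫ (D.φ₂ x (P.act v y)).hom ≫
        D.F.map (P.α₂ v x y).hom

/-- The identity unital module monoidal functor data. -/
def UMMFunctorData.id (P : ModMonData V M) : UMMFunctorData P P :=
  ⟨𝟭 M, fun x y => Iso.refl (x ⊗ y), Iso.refl (𝟙_ M), fun v x => Iso.refl (P.act v x)⟩

/-- Composition of unital module monoidal functor data. -/
def UMMFunctorData.comp {M'' : Type u₄} [Category.{v₄} M''] [MonoidalCategory M'']
    {P : ModMonData V M} {P' : ModMonData V M'} {P'' : ModMonData V M''}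
    (D : UMMFunctorData P P') (E : UMMFunctorData P' P'') : UMMFunctorData P P'' :=
  ⟨D.F ⋙ E.F,
    fun x y => E.φ₂ (D.F.obj x) (D.F.obj y) ≪≫ E.F.mapIso (D.φ₂ x y),
    E.φ₀ ≪≫ E.F.mapIso D.φ₀,
    fun v x => E.s v (D.F.obj x) ≪≫ E.F.mapIso (D.s v x)⟩

/-- Unital module monoidal natural transformations. -/
def IsUMMNT {P : ModMonData V M} {P' : ModMonData V M'}
    (D E : UMMFunctorData P P') (τ : D.F ⟶ E.F) : Prop :=
  (∀ x y : M, (D.φ₂ x y).hom ≫ τ.app (x ⊗ y) = (τ.app x ⊗ₘ τ.app y) ≫ (E.φ₂ x y).hom) ∧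
    (D.φ₀.hom ≫ τ.app (𝟙_ M) = E.φ₀.hom) ∧
    ∀ (v : V) (x : M), (D.s v x).hom ≫ τ.app (P.act v x) =
      P'.actMap (𝟙 v) (τ.app x) ≫ (E.s v x).hom

/-- `D` is an equivalence of unital module monoidal categories. -/
def UMMFunctorData.IsEquiv {P : ModMonData V M} {P' : ModMonData V M'}
    (D : UMMFunctorData P P') : Prop :=
  ∃ E : UMMFunctorData P' P, E.IsUMMFunctor ∧
    ∃ (η : (UMMFunctorData.id P).F ≅ (UMMFunctorData.comp D E).F)
      (ε : (UMMFunctorData.comp E D).F ≅ (UMMFunctorData.id P').F),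
      IsUMMNT (UMMFunctorData.id P) (UMMFunctorData.comp D E) η.hom ∧
        IsUMMNT (UMMFunctorData.comp E D) (UMMFunctorData.id P') ε.hom

end UMM

end ModMonPaper
/-! ### Pairs: braided central monoidal functors -/

namespace ModMonPaper

section Central

variable (V : Type u₁) [Category.{v₁} V] [MonoidalCategory V] [BraidedCategory V]
variable (T : Type u₂) [Category.{v₂} T] [MonoidalCategory T]
variable (T' : Type u₃) [Category.{v₃} T'] [MonoidalCategory T']

/-- The data of a braided central monoidal functor `V ⟶ T`, i.e. the data of a pair
`(T, F)`: the underlying functor `F`, the half-braidings of the chosen lift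
`F^Z : V ⟶ Z(T)` to the Drinfeld center, and the monoidal structure `φ₂`, `φ₀`. -/
structure CentralData where
  obj : V → T
  map : ∀ {v w : V}, (v ⟶ w) → (obj v ⟶ obj w)
  halfBraiding : ∀ (v : V) (t : T), obj v ⊗ t ≅ t ⊗ obj v
  φ₂ : ∀ v w : V, obj v ⊗ obj w ≅ obj (v ⊗ w)
  φ₀ : 𝟙_ T ≅ obj (𝟙_ V)

variable {V T T'}

/-- The axioms making `C : CentralData V T` into a braided central monoidal functor,
i.e. a pair `(T, F)`: `F` is a functor; each `(F v, halfBraiding v)` is an object of the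
Drinfeld center `Z(T)`; `F f`, `φ₂` and `φ₀` are morphisms in `Z(T)`; the lift is a
braided (strong) monoidal functor. -/
structure CentralData.IsCentral (C : CentralData V T) : Prop where
  map_id : ∀ v : V, C.map (𝟙 v) = 𝟙 (C.obj v)
  map_comp : ∀ {u v w : V} (f : u ⟶ v) (g : v ⟶ w), C.map (f ≫ g) = C.map f ≫ C.map g
  halfBraiding_natural : ∀ (v : V) {t t' : T} (f : t ⟶ t'),
    (𝟙 (C.obj v) ⊗ₘ f) ≫ (C.halfBraiding v t').hom =
      (C.halfBraiding v t).hom ≫ (f ⊗ₘ 𝟙 (C.obj v))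
  halfBraiding_hex : ∀ (v : V) (x y : T),
    (α_ (C.obj v) x y).hom ≫ (C.halfBraiding v (x ⊗ y)).hom ≫ (α_ x y (C.obj v)).hom =
      ((C.halfBraiding v x).hom ⊗ₘ 𝟙 y) ≫ (α_ x (C.obj v) y).hom ≫
        (𝟙 x ⊗ₘ (C.halfBraiding v y).hom)
  map_central : ∀ {v w : V} (f : v ⟶ w) (t : T),
    (C.map f ⊗ₘ 𝟙 t) ≫ (C.halfBraiding w t).hom =
      (C.halfBraiding v t).hom ≫ (𝟙 t ⊗ₘ C.map f)
  φ₂_natural : ∀ {v v' w w' : V} (f : v ⟶ v') (g : w ⟶ w'),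
    (C.map f ⊗ₘ C.map g) ≫ (C.φ₂ v' w').hom = (C.φ₂ v w).hom ≫ C.map (f ⊗ₘ g)
  φ₂_central : ∀ (v w : V) (t : T),
    ((C.φ₂ v w).hom ⊗ₘ 𝟙 t) ≫ (C.halfBraiding (v ⊗ w) t).hom =
      ((α_ (C.obj v) (C.obj w) t).hom ≫ (𝟙 (C.obj v) ⊗ₘ (C.halfBraiding w t).hom) ≫
        (α_ (C.obj v) t (C.obj w)).inv ≫ ((C.halfBraiding v t).hom ⊗ₘ 𝟙 (C.obj w)) ≫
          (α_ t (C.obj v) (C.obj w)).hom) ≫ (𝟙 t ⊗ₘ (C.φ₂ v w).hom)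
  φ₀_central : ∀ t : T,
    (C.φ₀.hom ⊗ₘ 𝟙 t) ≫ (C.halfBraiding (𝟙_ V) t).hom =
      ((λ_ t).hom ≫ (ρ_ t).inv) ≫ (𝟙 t ⊗ₘ C.φ₀.hom)
  hexagon : ∀ u v w : V,
    ((C.φ₂ u v).hom ⊗ₘ 𝟙 (C.obj w)) ≫ (C.φ₂ (u ⊗ v) w).hom ≫ C.map (α_ u v w).hom =
      (α_ (C.obj u) (C.obj v) (C.obj w)).hom ≫ (𝟙 (C.obj u) ⊗ₘ (C.φ₂ v w).hom) ≫
        (C.φ₂ u (v ⊗ w)).hom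
  φ₀_left : ∀ v : V,
    (C.φ₀.hom ⊗ₘ 𝟙 (C.obj v)) ≫ (C.φ₂ (𝟙_ V) v).hom ≫ C.map (λ_ v).hom =
      (λ_ (C.obj v)).hom
  φ₀_right : ∀ v : V,
    (𝟙 (C.obj v) ⊗ₘ C.φ₀.hom) ≫ (C.φ₂ v (𝟙_ V)).hom ≫ C.map (ρ_ v).hom =
      (ρ_ (C.obj v)).hom
  braided : ∀ v w : V,
    (C.φ₂ v w).hom ≫ C.map (β_ v w).hom =
      (C.halfBraiding v (C.obj w)).hom ≫ (C.φ₂ w v).hom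

/-- The data of a morphism of pairs `(T, C) ⟶ (T', C')`. -/
structure PairHomData (C : CentralData V T) (C' : CentralData V T') where
  G : T ⥤ T'
  φ₂ : ∀ x y : T, G.obj x ⊗ G.obj y ≅ G.obj (x ⊗ y)
  φ₀ : 𝟙_ T' ≅ G.obj (𝟙_ T)
  γ : ∀ v : V, C'.obj v ≅ G.obj (C.obj v)

/-- The axioms of a morphism of pairs: `(G, φ₂, φ₀)` is a (strong) monoidal functor and
`γ : F' ⟹ G ∘ F` is a monoidal natural isomorphism compatible with the half-braidings. -/
structure PairHomData.IsPairHom {C : CentralData V T} {C' : CentralData V T'}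
    (D : PairHomData C C') : Prop where
  φ₂_natural : ∀ {x x' y y' : T} (f : x ⟶ x') (g : y ⟶ y'),
    (D.G.map f ⊗ₘ D.G.map g) ≫ (D.φ₂ x' y').hom = (D.φ₂ x y).hom ≫ D.G.map (f ⊗ₘ g)
  hexagon : ∀ x y z : T,
    ((D.φ₂ x y).hom ⊗ₘ 𝟙 (D.G.obj z)) ≫ (D.φ₂ (x ⊗ y) z).hom ≫ D.G.map (α_ x y z).hom =
      (α_ (D.G.obj x) (D.G.obj y) (D.G.obj z)).hom ≫ (𝟙 (D.G.obj x) ⊗ₘ (D.φ₂ y z).hom) ≫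
        (D.φ₂ x (y ⊗ z)).hom
  φ₀_left : ∀ x : T,
    (D.φ₀.hom ⊗ₘ 𝟙 (D.G.obj x)) ≫ (D.φ₂ (𝟙_ T) x).hom ≫ D.G.map (λ_ x).hom =
      (λ_ (D.G.obj x)).hom
  φ₀_right : ∀ x : T,
    (𝟙 (D.G.obj x) ⊗ₘ D.φ₀.hom) ≫ (D.φ₂ x (𝟙_ T)).hom ≫ D.G.map (ρ_ x).hom =
      (ρ_ (D.G.obj x)).hom
  γ_natural : ∀ {v w : V} (f : v ⟶ w),
    C'.map f ≫ (D.γ w).hom = (D.γ v).hom ≫ D.G.map (C.map f)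
  γ_tensor : ∀ v w : V,
    (C'.φ₂ v w).hom ≫ (D.γ (v ⊗ w)).hom =
      ((D.γ v).hom ⊗ₘ (D.γ w).hom) ≫ (D.φ₂ (C.obj v) (C.obj w)).hom ≫
        D.G.map (C.φ₂ v w).hom
  γ_unit : C'.φ₀.hom ≫ (D.γ (𝟙_ V)).hom = D.φ₀.hom ≫ D.G.map C.φ₀.hom
  γ_braiding : ∀ (v : V) (t : T),
    ((D.γ v).hom ⊗ₘ 𝟙 (D.G.obj t)) ≫ (D.φ₂ (C.obj v) t).hom ≫
        D.G.map (C.halfBraiding v t).hom =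
      (C'.halfBraiding v (D.G.obj t)).hom ≫ (𝟙 (D.G.obj t) ⊗ₘ (D.γ v).hom) ≫
        (D.φ₂ t (C.obj v)).hom

/-- The identity morphism of pairs. -/
def PairHomData.id (C : CentralData V T) : PairHomData C C :=
  ⟨𝟭 T, fun x y => Iso.refl (x ⊗ y), Iso.refl (𝟙_ T), fun v => Iso.refl (C.obj v)⟩

/-- Composition of morphisms of pairs. -/
def PairHomData.comp {T'' : Type u₄} [Category.{v₄} T''] [MonoidalCategory T'']
    {C : CentralData V T} {C' : CentralData V T'} {C'' : CentralData V T''}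
    (D : PairHomData C C') (E : PairHomData C' C'') : PairHomData C C'' :=
  ⟨D.G ⋙ E.G,
    fun x y => E.φ₂ (D.G.obj x) (D.G.obj y) ≪≫ E.G.mapIso (D.φ₂ x y),
    E.φ₀ ≪≫ E.G.mapIso D.φ₀,
    fun v => E.γ v ≪≫ E.G.mapIso (D.γ v)⟩

/-- 2-morphisms of pairs. -/
def IsPair2Mor {C : CentralData V T} {C' : CentralData V T'}
    (D E : PairHomData C C') (τ : D.G ⟶ E.G) : Prop :=
  (∀ x y : T, (D.φ₂ x y).hom ≫ τ.app (x ⊗ y) = (τ.app x ⊗ₘ τ.app y) ≫ (E.φ₂ x y).hom) ∧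
    (D.φ₀.hom ≫ τ.app (𝟙_ T) = E.φ₀.hom) ∧
    ∀ v : V, (D.γ v).hom ≫ τ.app (C.obj v) = (E.γ v).hom

/-- `D` is an equivalence of pairs. -/
def PairHomData.IsEquiv {C : CentralData V T} {C' : CentralData V T'}
    (D : PairHomData C C') : Prop :=
  ∃ E : PairHomData C' C, E.IsPairHom ∧
    ∃ (η : (PairHomData.id C).G ≅ (PairHomData.comp D E).G)
      (ε : (PairHomData.comp E D).G ≅ (PairHomData.id C').G),
      IsPair2Mor (PairHomData.id C) (PairHomData.comp D E) η.hom ∧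
        IsPair2Mor (PairHomData.comp E D) (PairHomData.id C') ε.hom

end Central

end ModMonPaper
/-! ### The 2-functor `Ψ` and the pair associated to a module monoidal category -/

namespace ModMonPaper

section Psi

variable {V : Type u₁} [Category.{v₁} V] [MonoidalCategory V] [BraidedCategory V]
variable {T : Type u₂} [Category.{v₂} T] [MonoidalCategory T]
variable {T' : Type u₃} [Category.{v₃} T'] [MonoidalCategory T']

/-- `Ψ` on objects: the unital module monoidal structure induced by a pair. -/
def PsiData (C : CentralData V T) : ModMonData V T where
  act v x := C.obj v ⊗ x
  actMap f g := C.map f ⊗ₘ g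
  massoc v w x := tensorIso (C.φ₂ v w).symm (Iso.refl x) ≪≫ α_ (C.obj v) (C.obj w) x
  munit x := tensorIso C.φ₀.symm (Iso.refl x) ≪≫ λ_ x
  α₁ v x y := α_ (C.obj v) x y
  α₂ v x y := (α_ x (C.obj v) y).symm ≪≫
    tensorIso (C.halfBraiding v x).symm (Iso.refl y) ≪≫ α_ (C.obj v) x y

theorem psiData_actMap_id (C : CentralData V T) (hC : C.IsCentral) (v : V) (x : T) :
    (PsiData C).actMap (𝟙 v) (𝟙 x) = 𝟙 ((PsiData C).act v x) := by
  show C.map (𝟙 v) ⊗ₘ 𝟙 x = 𝟙 (C.obj v ⊗ x)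
  rw [hC.map_id, id_tensorHom_id]

theorem psiData_actMap_comp (C : CentralData V T) (hC : C.IsCentral)
    {v w u : V} {x y z : T} (f : v ⟶ w) (g : w ⟶ u) (h : x ⟶ y) (k : y ⟶ z) :
    (PsiData C).actMap (f ≫ g) (h ≫ k) =
      (PsiData C).actMap f h ≫ (PsiData C).actMap g k := by
  show C.map (f ≫ g) ⊗ₘ (h ≫ k) = (C.map f ⊗ₘ h) ≫ (C.map g ⊗ₘ k)
  rw [hC.map_comp, ← tensorHom_comp_tensorHom]

/-- `Ψ` on 1-morphisms: the unital module monoidal functor induced by a morphism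
of pairs. -/
def PsiHom {C : CentralData V T} {C' : CentralData V T'} (D : PairHomData C C') :
    UMMFunctorData (PsiData C) (PsiData C') where
  F := D.G
  φ₂ := D.φ₂
  φ₀ := D.φ₀
  s v x := tensorIso (D.γ v) (Iso.refl (D.G.obj x)) ≪≫ D.φ₂ (C.obj v) x

variable {M : Type u₂} [Category.{v₂} M] [MonoidalCategory M]

/-- The pair associated to a unital module monoidal category:
`F v := v ▷ 𝟙`, with the half-braiding, `φ₂` and `φ₀` of the paper. -/
def pairOfModMon (P : ModMonData V M)
    (hid : ∀ (v : V) (x : M), P.actMap (𝟙 v) (𝟙 x) = 𝟙 (P.act v x))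
    (hcomp : ∀ {v w u : V} {x y z : M} (f : v ⟶ w) (g : w ⟶ u) (h : x ⟶ y) (k : y ⟶ z),
      P.actMap (f ≫ g) (h ≫ k) = P.actMap f h ≫ P.actMap g k) :
    CentralData V M where
  obj v := P.act v (𝟙_ M)
  map f := P.actMap f (𝟙 (𝟙_ M))
  halfBraiding v t := P.α₁ v (𝟙_ M) t ≪≫
    P.toModuleData.actIso hid hcomp v (λ_ t ≪≫ (ρ_ t).symm) ≪≫ (P.α₂ v t (𝟙_ M)).symm
  φ₂ v w := P.α₁ v (𝟙_ M) (P.act w (𝟙_ M)) ≪≫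
    P.toModuleData.actIso hid hcomp v (P.α₂ w (𝟙_ M) (𝟙_ M)) ≪≫
      (P.massoc v w (𝟙_ M ⊗ 𝟙_ M)).symm ≪≫
        P.toModuleData.actIso hid hcomp (v ⊗ w) (ρ_ (𝟙_ M))
  φ₀ := (P.munit (𝟙_ M)).symm

end Psi

end ModMonPaper
/-!
Everything is read off from the module structure `s` at the unit object. Taking `m = 𝟙` in
(comp.α¹) and using naturality of `s` in the left unitor gives `s_{v,m} = φ₂ ∘ (γ_v ⊗ id)` for
every `m`. Naturality of `γ` and its compatibility with `φ₀` come from the naturality and triangle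
axioms of `s` at `𝟙`. Substituting the formula for `s` into the module pentagon and into
(comp.α²), and cancelling the invertible `φ₂` and associators, gives the monoidality of `γ` and
its compatibility with the half-braidings, both whiskered on the right by `G(𝟙)`; since
`G(𝟙) ≅ 𝟙`, that whiskering can be cancelled too.
-/

namespace ModMonPaper

section

variable {W : Type u₄} [Category.{v₄} W] [MonoidalCategory W]

theorem whiskerRight_injective_of_iso_unit {X : W} (e : 𝟙_ W ≅ X) {A B : W} {f g : A ⟶ B}
    (h : f ▷ X = g ▷ X) : f = g := by
  rw [← whiskerRight_iff, ← cancel_mono (B ◁ e.hom), ← whisker_exchange, ← whisker_exchange, h]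

theorem associator_inv_eq_of_iso_unit {Z : W} (e : 𝟙_ W ≅ Z) (X Y : W) :
    (α_ X Z Y).inv = (X ◁ ((e.inv ▷ Y) ≫ (λ_ Y).hom)) ≫ (((ρ_ X).inv ≫ (X ◁ e.hom)) ▷ Y) := by
  simp

end

namespace UMMFunctorData.IsUMMFunctor

variable {V : Type u₁} [Category.{v₁} V] [MonoidalCategory V]
variable {M : Type u₂} [Category.{v₂} M] [MonoidalCategory M]
variable {M' : Type u₃} [Category.{v₃} M'] [MonoidalCategory M']
variable {P : ModMonData V M} {P' : ModMonData V M'} {D : UMMFunctorData P P'}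

theorem φ₂_natural_left (hD : D.IsUMMFunctor) {x x' : M} (f : x ⟶ x') (y : M) :
    (D.F.map f ▷ D.F.obj y) ≫ (D.φ₂ x' y).hom = (D.φ₂ x y).hom ≫ D.F.map (f ▷ y) := by
  simpa using hD.φ₂_natural f (𝟙 y)

theorem whiskerLeft_φ₂_comp_φ₂ (hD : D.IsUMMFunctor) (x y z : M) :
    (D.F.obj x ◁ (D.φ₂ y z).hom) ≫ (D.φ₂ x (y ⊗ z)).hom =
      (α_ _ _ _).inv ≫ ((D.φ₂ x y).hom ▷ D.F.obj z) ≫ (D.φ₂ (x ⊗ y) z).hom ≫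
        D.F.map (α_ x y z).hom := by
  simpa using congr((α_ _ _ _).inv ≫ $(hD.hexagon x y z)).symm

theorem φ₂_comp_map_leftUnitor (hD : D.IsUMMFunctor) (x : M) :
    (D.φ₂ (𝟙_ M) x).hom ≫ D.F.map (λ_ x).hom = (D.φ₀.inv ▷ D.F.obj x) ≫ (λ_ (D.F.obj x)).hom := by
  simpa using congr((D.φ₀.inv ▷ D.F.obj x) ≫ $(hD.φ₀_left x))

theorem map_rightUnitor (hD : D.IsUMMFunctor) (x : M) :
    D.F.map (ρ_ x).hom = (D.φ₂ x (𝟙_ M)).inv ≫ (D.F.obj x ◁ D.φ₀.inv) ≫ (ρ_ (D.F.obj x)).hom := by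
  simp [← hD.φ₀_right x]

end UMMFunctorData.IsUMMFunctor

section Psi

variable {V : Type u₁} [Category.{v₁} V] [MonoidalCategory V]
variable {T : Type u₂} [Category.{v₂} T] [MonoidalCategory T]
variable {T' : Type u₃} [Category.{v₃} T'] [MonoidalCategory T']
variable {C : CentralData V T} {C' : CentralData V T'}

theorem psiData_act (v : V) (x : T) : (PsiData C).act v x = C.obj v ⊗ x := rfl

theorem psiData_actMap_id_right {v w : V} (f : v ⟶ w) (x : T) :
    (PsiData C).actMap f (𝟙 x) = C.map f ▷ x := by
  simp [PsiData]

theorem psiData_massoc_hom (v w : V) (x : T) :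
    ((PsiData C).massoc v w x).hom = ((C.φ₂ v w).inv ▷ x) ≫ (α_ (C.obj v) (C.obj w) x).hom := by
  simp [PsiData]

theorem psiData_munit_hom (x : T) :
    ((PsiData C).munit x).hom = (C.φ₀.inv ▷ x) ≫ (λ_ x).hom := by
  simp [PsiData]

theorem psiData_α₁_hom (v : V) (x y : T) :
    ((PsiData C).α₁ v x y).hom = (α_ (C.obj v) x y).hom := rfl

theorem psiData_α₂_hom (v : V) (x y : T) :
    ((PsiData C).α₂ v x y).hom =
      (α_ x (C.obj v) y).inv ≫ ((C.halfBraiding v x).inv ▷ y) ≫ (α_ (C.obj v) x y).hom := by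
  simp [PsiData]

variable {D : UMMFunctorData (PsiData C) (PsiData C')}

/-- `(D.s v x).hom`, retyped from `(PsiData C').act v _ ⟶ _` to the definitionally equal
`C'.obj v ⊗ _ ⟶ _`: rewriting and `monoidal` only see through the latter. -/
def UMMFunctorData.sHom (D : UMMFunctorData (PsiData C) (PsiData C')) (v : V) (x : T) :
    C'.obj v ⊗ D.F.obj x ⟶ D.F.obj (C.obj v ⊗ x) :=
  (D.s v x).hom

theorem UMMFunctorData.s_hom (v : V) (x : T) : (D.s v x).hom = D.sHom v x := rfl

def UMMFunctorData.gamma (D : UMMFunctorData (PsiData C) (PsiData C')) (v : V) :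
    C'.obj v ⟶ D.F.obj (C.obj v) :=
  (ρ_ (C'.obj v)).inv ≫ (C'.obj v ◁ D.φ₀.hom) ≫ D.sHom v (𝟙_ T) ≫ D.F.map (ρ_ (C.obj v)).hom

namespace UMMFunctorData.IsUMMFunctor

theorem gamma_eq (hD : D.IsUMMFunctor) (v : V) :
    ((ρ_ (C'.obj v)).symm ≪≫ tensorIso (Iso.refl (C'.obj v)) D.φ₀ ≪≫
        D.s v (𝟙_ T) ≪≫ (D.φ₂ (C.obj v) (𝟙_ T)).symm ≪≫
          tensorIso (Iso.refl (D.F.obj (C.obj v))) D.φ₀.symm ≪≫ ρ_ (D.F.obj (C.obj v))).hom =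
      D.gamma v := by
  change (ρ_ _).inv ≫ (𝟙 _ ⊗ₘ D.φ₀.hom) ≫ D.sHom v (𝟙_ T) ≫ (D.φ₂ _ _).inv ≫
    (𝟙 _ ⊗ₘ D.φ₀.inv) ≫ (ρ_ _).hom = _
  simp [UMMFunctorData.gamma, hD.map_rightUnitor]

theorem gamma_natural (hD : D.IsUMMFunctor) {v w : V} (f : v ⟶ w) :
    C'.map f ≫ D.gamma w = D.gamma v ≫ D.F.map (C.map f) := by
  have hnat := hD.s_natural f (𝟙 (𝟙_ T))
  rw [D.F.map_id, psiData_actMap_id_right, psiData_actMap_id_right, UMMFunctorData.s_hom,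
    UMMFunctorData.s_hom] at hnat
  dsimp only [psiData_act] at hnat
  simp only [UMMFunctorData.gamma, assoc]
  rw [rightUnitor_inv_naturality_assoc, ← whisker_exchange_assoc, reassoc_of% hnat,
    ← Functor.map_comp, ← Functor.map_comp, rightUnitor_naturality]

theorem gamma_unit (hD : D.IsUMMFunctor) :
    C'.φ₀.hom ≫ D.gamma (𝟙_ V) = D.φ₀.hom ≫ D.F.map C.φ₀.hom := by
  have htri := hD.s_triangle (𝟙_ T)
  rw [psiData_munit_hom, psiData_munit_hom, UMMFunctorData.s_hom] at htri
  dsimp only [psiData_act] at htri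
  have hρ : (ρ_ (C.obj (𝟙_ V))).hom = ((C.φ₀.inv ▷ 𝟙_ T) ≫ (λ_ (𝟙_ T)).hom) ≫ C.φ₀.hom := by
    simp [unitors_equal]
  rw [UMMFunctorData.gamma, hρ, Functor.map_comp, reassoc_of% htri,
    rightUnitor_inv_naturality_assoc, ← whisker_exchange_assoc, hom_inv_whiskerRight_assoc]
  simp [unitors_equal]

end UMMFunctorData.IsUMMFunctor

variable [BraidedCategory V]

theorem psiData_actMap_id_left (hC : C.IsCentral) (v : V) {x y : T} (g : x ⟶ y) :
    (PsiData C).actMap (𝟙 v) g = C.obj v ◁ g := by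
  simp [PsiData, hC.map_id]

namespace UMMFunctorData.IsUMMFunctor

theorem sHom_eq (hC : C.IsCentral) (hC' : C'.IsCentral) (hD : D.IsUMMFunctor) (v : V) (m : T) :
    D.sHom v m = (D.gamma v ▷ D.F.obj m) ≫ (D.φ₂ (C.obj v) m).hom := by
  have hα₁ := hD.compα₁ v (𝟙_ T) m
  have hunit := hD.s_natural (𝟙 v) (λ_ m).hom
  simp only [psiData_α₁_hom, psiData_actMap_id_left hC', psiData_actMap_id_left hC,
    UMMFunctorData.s_hom] at hα₁ hunit
  dsimp only [psiData_act] at hα₁ hunit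
  simp only [tensorHom_id] at hα₁
  rw [← cancel_epi (C'.obj v ◁ ((D.φ₂ (𝟙_ T) m).hom ≫ D.F.map (λ_ m).hom))]
  calc _ = (α_ _ _ _).inv ≫ (D.sHom v (𝟙_ T) ▷ D.F.obj m) ≫ (D.φ₂ (C.obj v ⊗ 𝟙_ T) m).hom ≫
        D.F.map ((α_ _ _ _).hom ≫ (C.obj v ◁ (λ_ m).hom)) := by
        rw [whiskerLeft_comp, assoc, hunit, Functor.map_comp, ← reassoc_of% hα₁,
          Iso.inv_hom_id_assoc]
    _ = (α_ _ _ _).inv ≫ ((D.sHom v (𝟙_ T) ≫ D.F.map (ρ_ (C.obj v)).hom) ▷ D.F.obj m) ≫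
        (D.φ₂ (C.obj v) m).hom := by
        rw [triangle, comp_whiskerRight, assoc, hD.φ₂_natural_left]
    _ = _ := by
        rw [hD.φ₂_comp_map_leftUnitor, associator_inv_eq_of_iso_unit D.φ₀,
          UMMFunctorData.gamma]
        simp only [comp_whiskerRight, assoc]

theorem whiskerRight_gamma_tensor (hC : C.IsCentral) (hC' : C'.IsCentral) (hD : D.IsUMMFunctor)
    (v w : V) (x : T) :
    (D.gamma (v ⊗ w) ≫ D.F.map (C.φ₂ v w).inv) ▷ D.F.obj x =
      ((C'.φ₂ v w).inv ≫ (D.gamma v ⊗ₘ D.gamma w) ≫ (D.φ₂ (C.obj v) (C.obj w)).hom) ▷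
        D.F.obj x := by
  have hp := hD.s_pentagon v w x
  rw [psiData_massoc_hom, psiData_massoc_hom, psiData_actMap_id_left hC'] at hp
  simp only [UMMFunctorData.s_hom, hD.sHom_eq hC hC'] at hp
  dsimp only [psiData_act] at hp
  rw [← cancel_mono ((D.φ₂ (C.obj v ⊗ C.obj w) x).hom ≫ D.F.map (α_ _ _ _).hom)]
  refine Eq.trans ?_ (hp.trans ?_)
  · rw [Functor.map_comp, comp_whiskerRight, assoc, reassoc_of% hD.φ₂_natural_left, assoc]
  · rw [whiskerLeft_comp, assoc, assoc, whisker_exchange_assoc, hD.whiskerLeft_φ₂_comp_φ₂,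
      tensorHom_def']
    monoidal

theorem gamma_tensor (hC : C.IsCentral) (hC' : C'.IsCentral) (hD : D.IsUMMFunctor) (v w : V) :
    (C'.φ₂ v w).hom ≫ D.gamma (v ⊗ w) =
      (D.gamma v ⊗ₘ D.gamma w) ≫ (D.φ₂ (C.obj v) (C.obj w)).hom ≫ D.F.map (C.φ₂ v w).hom := by
  have h := whiskerRight_injective_of_iso_unit D.φ₀
    (hD.whiskerRight_gamma_tensor hC hC' v w (𝟙_ T))
  rw [← Functor.mapIso_inv, Iso.comp_inv_eq] at h
  simp [h]

theorem whiskerRight_gamma_halfBraiding (hC : C.IsCentral) (hC' : C'.IsCentral)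
    (hD : D.IsUMMFunctor) (v : V) (t y : T) :
    ((C'.halfBraiding v (D.F.obj t)).inv ≫ (D.gamma v ▷ D.F.obj t) ≫ (D.φ₂ (C.obj v) t).hom) ▷
        D.F.obj y =
      ((D.F.obj t ◁ D.gamma v) ≫ (D.φ₂ t (C.obj v)).hom ≫ D.F.map (C.halfBraiding v t).inv) ▷
        D.F.obj y := by
  have h := hD.compα₂ v t y
  simp only [psiData_α₂_hom, psiData_actMap_id_left hC', UMMFunctorData.s_hom,
    hD.sHom_eq hC hC'] at h
  dsimp only [psiData_act] at h
  rw [← cancel_epi (α_ (D.F.obj t) (C'.obj v) (D.F.obj y)).inv,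
    ← cancel_mono ((D.φ₂ (C.obj v ⊗ t) y).hom ≫ D.F.map (α_ _ _ _).hom)]
  refine Eq.trans ?_ (h.trans ?_)
  · rw [assoc, whisker_exchange_assoc, hD.whiskerLeft_φ₂_comp_φ₂]
    monoidal
  · rw [id_tensorHom, whiskerLeft_comp, assoc, reassoc_of% hD.whiskerLeft_φ₂_comp_φ₂]
    simp only [Functor.map_comp, assoc, Iso.map_hom_inv_id_assoc]
    rw [← reassoc_of% hD.φ₂_natural_left]
    monoidal

theorem gamma_halfBraiding (hC : C.IsCentral) (hC' : C'.IsCentral) (hD : D.IsUMMFunctor)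
    (v : V) (t : T) :
    (D.gamma v ▷ D.F.obj t) ≫ (D.φ₂ (C.obj v) t).hom ≫ D.F.map (C.halfBraiding v t).hom =
      (C'.halfBraiding v (D.F.obj t)).hom ≫ (D.F.obj t ◁ D.gamma v) ≫ (D.φ₂ t (C.obj v)).hom := by
  have h := whiskerRight_injective_of_iso_unit D.φ₀
    (hD.whiskerRight_gamma_halfBraiding hC hC' v t (𝟙_ T))
  simpa using congr((C'.halfBraiding v (D.F.obj t)).hom ≫ $h ≫ D.F.map (C.halfBraiding v t).hom)

end UMMFunctorData.IsUMMFunctor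

end Psi

end ModMonPaper

namespace ModMonPaper

section Stmt18

variable {V : Type u₁} [Category.{v₁} V] [MonoidalCategory V] [BraidedCategory V]
variable {T : Type u₂} [Category.{v₂} T] [MonoidalCategory T]
variable {T' : Type u₃} [Category.{v₃} T'] [MonoidalCategory T']

/-- Given a unital module monoidal functor
`(G, φ₂, φ₀, s) : Ψ(T, F) ⟶ Ψ(T', F')`, the data `(G, φ₂, φ₀, γ)` with
`γ_v := r' ∘ (id ⊗' φ₀⁻¹) ∘ φ₂⁻¹ ∘ s_{v,𝟙} ∘ (id ⊗' φ₀) ∘ r'⁻¹` is a morphism of pairs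
`(T, F) ⟶ (T', F')`, and `Ψ` applied to it recovers `(G, φ₂, φ₀, s)`:
`s_{v,m} = φ₂ ∘ (γ_v ⊗' id)`. Hence `Ψ` is surjective on 1-morphisms. -/
theorem psi_surjective_on_pairHoms {C : CentralData V T} {C' : CentralData V T'}
    (hC : C.IsCentral) (hC' : C'.IsCentral)
    (D : UMMFunctorData (PsiData C) (PsiData C')) (hD : D.IsUMMFunctor) :
    let γ : ∀ v : V, C'.obj v ≅ D.F.obj (C.obj v) := fun v =>
      (ρ_ (C'.obj v)).symm ≪≫ tensorIso (Iso.refl (C'.obj v)) D.φ₀ ≪≫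
        D.s v (𝟙_ T) ≪≫ (D.φ₂ (C.obj v) (𝟙_ T)).symm ≪≫
          tensorIso (Iso.refl (D.F.obj (C.obj v))) D.φ₀.symm ≪≫ ρ_ (D.F.obj (C.obj v));
    let GD : PairHomData C C' := ⟨D.F, D.φ₂, D.φ₀, γ⟩;
    GD.IsPairHom ∧
      ∀ (v : V) (m : T),
        (D.s v m).hom = ((γ v).hom ⊗ₘ 𝟙 (D.F.obj m)) ≫ (D.φ₂ (C.obj v) m).hom := by
  intro γ GD
  have hγ (v : V) : (γ v).hom = D.gamma v := hD.gamma_eq v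
  refine ⟨⟨hD.φ₂_natural, hD.hexagon, hD.φ₀_left, hD.φ₀_right, fun f => ?_, fun v w => ?_, ?_,
    fun v t => ?_⟩, fun v m => ?_⟩
  · simpa only [GD, hγ] using hD.gamma_natural f
  · simpa only [GD, hγ] using hD.gamma_tensor hC hC' v w
  · simpa only [GD, hγ] using hD.gamma_unit
  · simpa only [GD, hγ, tensorHom_id, id_tensorHom] using hD.gamma_halfBraiding hC hC' v t
  · rw [hγ, tensorHom_id]
    exact hD.sHom_eq hC hC' v m

end Stmt18

end ModMonPaper
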